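/- Let n = k + l and let all matrices be real, partitioned as follows: A = [[A₁₁, A₁₂], [0, A₂₂]] (n×n), B = [B₁; 0] (n×m), C = [C₁, C₂] (m×n), P = [[I_k, 0], [0, 0]] (n×n), S = [[S₁₁, 0], [0, S₂₂]] (n×n) with S₁₁ = S₁₁ᵀ, and M = [M₁, 0] (r×n with M₁ of size r×k). Suppose Sᵀ A P + Pᵀ Aᵀ S = −Mᵀ M and C P = Bᵀ S. Then for every s ∈ ℂ such that sI − A₁₁ and sI + A₁₁ᵀ are invertible (real matrices coerced entrywise into ℂ), the generalized transfer matrix G(s) = C₁ (sI − A₁₁)⁻¹ B₁ of the DAE system P ż = A P z + B u, y = C P z satisfies G(s) + G(−s)ᵀ = K(−s)ᵀ K(s), where K(s) = M₁ (sI − A₁₁)⁻¹ B₁; explicitly, C₁(sI−A₁₁)⁻¹B₁ + B₁ᵀ(−sI−A₁₁ᵀ)⁻¹C₁ᵀ = B₁ᵀ(−sI−A₁₁ᵀ)⁻¹M₁ᵀ M₁ (sI−A₁₁)⁻¹B₁. -/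

import Mathlib

/-!
Only the leading blocks of the two conditions matter: they say `S₁₁ A₁₁ + A₁₁ᵀ S₁₁ = -M₁ᵀ M₁`
and `C₁ = B₁ᵀ S₁₁`. With `X = sI - A₁₁` and `Z = -sI - A₁₁ᵀ` the Lyapunov equation becomes
`Z S₁₁ + S₁₁ X = M₁ᵀ M₁`, and multiplying by `Z⁻¹` on the left and `X⁻¹` on the right gives
`S₁₁ X⁻¹ + Z⁻¹ S₁₁ = Z⁻¹ M₁ᵀ M₁ X⁻¹`; sandwiching between `B₁ᵀ` and `B₁` is the claim.
-/

open Matrix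

/-- Entrywise coercion of a real matrix into a complex matrix. -/
def cm {a b : ℕ} (M : Matrix (Fin a) (Fin b) ℝ) : Matrix (Fin a) (Fin b) ℂ :=
  M.map Complex.ofReal

lemma cm_mul {a b c : ℕ} (M : Matrix (Fin a) (Fin b) ℝ) (N : Matrix (Fin b) (Fin c) ℝ) :
    cm (M * N) = cm M * cm N :=
  Matrix.map_mul (f := Complex.ofRealHom)

lemma cm_transpose {a b : ℕ} (M : Matrix (Fin a) (Fin b) ℝ) : cm Mᵀ = (cm M)ᵀ :=
  Matrix.transpose_map

lemma cm_add {a b : ℕ} (M N : Matrix (Fin a) (Fin b) ℝ) : cm (M + N) = cm M + cm N :=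
  Matrix.map_add _ Complex.ofReal_add M N

lemma cm_neg {a b : ℕ} (M : Matrix (Fin a) (Fin b) ℝ) : cm (-M) = -cm M :=
  Matrix.map_neg _ Complex.ofReal_neg M

section Blocks

variable {R : Type*} [CommRing R] {k l p q : Type*} [Fintype k] [Fintype l] [Fintype q]
  [DecidableEq k]

lemma lyapunov_leading_block (A11 : Matrix k k R) (A12 : Matrix k l R) (A22 : Matrix l l R)
    (S11 : Matrix k k R) (S22 : Matrix l l R) (M1 : Matrix q k R) (hS11 : S11ᵀ = S11)
    (h : (fromBlocks S11 0 0 S22)ᵀ * fromBlocks A11 A12 0 A22 * fromBlocks 1 0 0 0 +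
        (fromBlocks 1 0 0 0)ᵀ * (fromBlocks A11 A12 0 A22)ᵀ * fromBlocks S11 0 0 S22 =
        -((fromCols M1 (0 : Matrix q l R))ᵀ * fromCols M1 0)) :
    S11 * A11 + A11ᵀ * S11 = -(M1ᵀ * M1) := by
  rw [transpose_fromCols, fromRows_mul_fromCols] at h
  simp only [fromBlocks_transpose, fromBlocks_multiply, hS11, Matrix.mul_zero, Matrix.zero_mul,
    Matrix.mul_one, Matrix.one_mul, transpose_zero, transpose_one, add_zero, zero_add,
    fromBlocks_neg, fromBlocks_add] at h
  exact (fromBlocks_inj.mp h).1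

lemma output_leading_block (B1 : Matrix k p R) (C1 : Matrix p k R) (C2 : Matrix p l R)
    (S11 : Matrix k k R) (S22 : Matrix l l R)
    (h : fromCols C1 C2 * fromBlocks 1 0 0 0 =
        (fromRows B1 (0 : Matrix l p R))ᵀ * fromBlocks S11 0 0 S22) :
    C1 = B1ᵀ * S11 := by
  -- the left product elaborates with the (defeq) `CStarMatrix` multiplication instance
  erw [fromCols_mul_fromBlocks] at h
  simp only [transpose_fromRows, fromCols_mul_fromBlocks, Matrix.mul_zero, Matrix.zero_mul,
    Matrix.mul_one, add_zero, transpose_zero] at h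
  exact (fromCols_inj h).1

end Blocks

section Resolvent

variable {R : Type*} [CommRing R] {n p q : Type*} [Fintype n] [Fintype q] [DecidableEq n]

lemma mul_inv_add_inv_mul_of_sylvester {X Z S Q : Matrix n n R} (hX : IsUnit X) (hZ : IsUnit Z)
    (h : Z * S + S * X = Q) : S * X⁻¹ + Z⁻¹ * S = Z⁻¹ * Q * X⁻¹ := by
  rw [← h, Matrix.mul_add, Matrix.add_mul,
    nonsing_inv_mul_cancel_left _ _ ((isUnit_iff_isUnit_det Z).mp hZ), ← Matrix.mul_assoc Z⁻¹,
    mul_nonsing_inv_cancel_right _ _ ((isUnit_iff_isUnit_det X).mp hX)]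

/-- `G(s) + G(-s)ᵀ = K(-s)ᵀ K(s)` for `G(s) = C (sI - A)⁻¹ B` and `K(s) = M (sI - A)⁻¹ B`. -/
theorem resolvent_add_transpose_eq_of_lyapunov (A S : Matrix n n R) (B : Matrix n p R)
    (C : Matrix p n R) (M : Matrix q n R) (hS : Sᵀ = S) (hL : S * A + Aᵀ * S = -(Mᵀ * M))
    (hC : C = Bᵀ * S) (s : R) (hX : IsUnit (s • (1 : Matrix n n R) - A))
    (hZ : IsUnit (s • (1 : Matrix n n R) + Aᵀ)) :
    C * (s • 1 - A)⁻¹ * B + Bᵀ * (-(s • 1) - Aᵀ)⁻¹ * Cᵀ =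
      (Bᵀ * (-(s • 1) - Aᵀ)⁻¹ * Mᵀ) * (M * (s • 1 - A)⁻¹ * B) := by
  set X := s • (1 : Matrix n n R) - A
  set Z := -(s • (1 : Matrix n n R)) - Aᵀ
  have hZ' : IsUnit Z := by simpa only [neg_add'] using hZ.neg
  have hSylvester : Z * S + S * X = Mᵀ * M := by
    rw [← neg_neg (Mᵀ * M), ← hL]
    simp only [X, Z, sub_mul, mul_sub, neg_mul, smul_mul_assoc, mul_smul_comm, one_mul, mul_one]
    abel
  have hCt : Cᵀ = S * B := by rw [hC, transpose_mul, hS, transpose_transpose]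
  calc C * X⁻¹ * B + Bᵀ * Z⁻¹ * Cᵀ = Bᵀ * (S * X⁻¹ + Z⁻¹ * S) * B := by
        rw [hCt, hC]
        simp only [Matrix.mul_add, Matrix.add_mul, Matrix.mul_assoc]
    _ = Bᵀ * (Z⁻¹ * (Mᵀ * M) * X⁻¹) * B := by
        rw [mul_inv_add_inv_mul_of_sylvester hX hZ' hSylvester]
    _ = Bᵀ * Z⁻¹ * Mᵀ * (M * X⁻¹ * B) := by simp only [Matrix.mul_assoc]

end Resolvent

theorem stmt_12 {k l m r : ℕ}
    (A11 : Matrix (Fin k) (Fin k) ℝ) (A12 : Matrix (Fin k) (Fin l) ℝ)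
    (A22 : Matrix (Fin l) (Fin l) ℝ)
    (B1 : Matrix (Fin k) (Fin m) ℝ)
    (C1 : Matrix (Fin m) (Fin k) ℝ) (C2 : Matrix (Fin m) (Fin l) ℝ)
    (S11 : Matrix (Fin k) (Fin k) ℝ) (S22 : Matrix (Fin l) (Fin l) ℝ)
    (M1 : Matrix (Fin r) (Fin k) ℝ)
    (hS11 : S11ᵀ = S11)
    -- the factored generalized Lyapunov equation  Sᵀ A P + Pᵀ Aᵀ S = − Mᵀ M :
    (h1 : (Matrix.fromBlocks S11 0 0 S22)ᵀ *
          (Matrix.fromBlocks A11 A12 0 A22) * (Matrix.fromBlocks 1 0 0 0) +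
        (Matrix.fromBlocks 1 0 0 0)ᵀ * (Matrix.fromBlocks A11 A12 0 A22)ᵀ *
          (Matrix.fromBlocks S11 0 0 S22) =
        -((Matrix.fromCols M1 0)ᵀ * (Matrix.fromCols M1 0)))
    -- the output matching condition  C P = Bᵀ S :
    (h2 : (Matrix.fromCols C1 C2) * (Matrix.fromBlocks 1 0 0 0) =
        (Matrix.fromRows B1 (0 : Matrix (Fin l) (Fin m) ℝ))ᵀ *
          (Matrix.fromBlocks S11 0 0 S22)) :
    ∀ s : ℂ,
      IsUnit (s • (1 : Matrix (Fin k) (Fin k) ℂ) - cm A11) →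
      IsUnit (s • (1 : Matrix (Fin k) (Fin k) ℂ) + (cm A11)ᵀ) →
      cm C1 * (s • (1 : Matrix (Fin k) (Fin k) ℂ) - cm A11)⁻¹ * cm B1 +
        (cm B1)ᵀ * (-(s • (1 : Matrix (Fin k) (Fin k) ℂ)) - (cm A11)ᵀ)⁻¹ * (cm C1)ᵀ =
      ((cm B1)ᵀ * (-(s • (1 : Matrix (Fin k) (Fin k) ℂ)) - (cm A11)ᵀ)⁻¹ * (cm M1)ᵀ) *
        (cm M1 * (s • (1 : Matrix (Fin k) (Fin k) ℂ) - cm A11)⁻¹ * cm B1) := by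
  have hL := congrArg cm (lyapunov_leading_block A11 A12 A22 S11 S22 M1 hS11 h1)
  have hC := congrArg cm (output_leading_block B1 C1 C2 S11 S22 h2)
  rw [cm_add, cm_neg, cm_mul, cm_mul, cm_mul, cm_transpose, cm_transpose] at hL
  rw [cm_mul, cm_transpose] at hC
  have hS : (cm S11)ᵀ = cm S11 := by rw [← cm_transpose, hS11]
  exact resolvent_add_transpose_eq_of_lyapunov _ _ _ _ _ hS hL hC
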